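/- arXiv:1501.02414 — 2 statements merged into one kernel-verified Lean document; each statement's English description precedes it below -/
import Mathlib

section
/- Let χ ∈ (0,1), θ ∈ (χ,1], η̄ > 0, {η_l} real numbers with 0 ≤ η_l ≤ η̄ l^{-θ}, and A a symmetric positive-definite real d×d matrix. Define F_{j,n} = j^{-χ} ∏_{l=j+1}^{n−1} (I − l^{-χ}A + η_l I) and F̄_{j,n} = η_j j^{χ} F_{j,n} for 1 ≤ j ≤ n−1 (products in decreasing order of index). Then for every fixed h ∈ ℝ^d, |Σ_{j=1}^{n−1} F̄_{j,n} h| → 0 as n → ∞. -/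
open Filter Finset
open scoped RealInnerProductSpace Topology

/-- `prodDesc B p q = B_q * B_{q-1} * ⋯ * B_p` (decreasing order of index);
an empty product (`p > q`) is the identity. -/
noncomputable def prodDesc {d : ℕ}
    (B : ℕ → EuclideanSpace ℝ (Fin d) →L[ℝ] EuclideanSpace ℝ (Fin d)) (p q : ℕ) :
    EuclideanSpace ℝ (Fin d) →L[ℝ] EuclideanSpace ℝ (Fin d) :=
  ((List.range (q + 1 - p)).map fun i => B (q - i)).prod

/-!
Let `c > 0` satisfy `c ‖x‖² ≤ ⟪A x, x⟫` and put `a_l = (c / 4) l^{-χ}`. For large `l` the factor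
`B_l = I - l^{-χ} A + η_l I` satisfies `‖B_l‖ ≤ 1 - a_l`, and `η_l = o(a_l)` because `θ > χ`.
Since `j^χ` and `j^{-χ}` cancel, the norm of the sum is at most `‖h‖ ∑_j |η_j| ∏_{j<l<n} ‖B_l‖`.
Once `|η_j| ≤ δ a_j` for `j ≥ M`, these terms contribute at most
`δ ∑_j a_j ∏_{j<l<n} (1 - a_l) = δ (1 - ∏_{M≤l<n} (1 - a_l)) ≤ δ`, while the finitely many terms
with `j < M` carry the factor `∏_{M≤l<n} (1 - a_l) ≤ exp (-∑_{M≤l<n} a_l)`, which tends to `0`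
because `χ ≤ 1` makes `∑ a_l` diverge.
-/

open Asymptotics

section ProdDesc

variable {d : ℕ} (B : ℕ → EuclideanSpace ℝ (Fin d) →L[ℝ] EuclideanSpace ℝ (Fin d))

lemma prodDesc_of_lt {p q : ℕ} (h : q < p) : prodDesc B p q = 1 := by
  simp [prodDesc, Nat.sub_eq_zero_of_le h]

lemma prodDesc_self (p : ℕ) : prodDesc B p p = B p := by
  simp [prodDesc]

lemma prodDesc_succ {p q : ℕ} (h : p ≤ q + 1) :
    prodDesc B p (q + 1) = B (q + 1) * prodDesc B p q := by
  rw [prodDesc, prodDesc, show q + 1 + 1 - p = q + 1 - p + 1 by omega, List.range_succ_eq_map,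
    List.map_cons, List.map_map, List.prod_cons]
  congr 2
  exact List.map_congr_left fun i _ => by simp

lemma norm_prodDesc_le {c : ℕ → ℝ} (hc : ∀ l, ‖B l‖ ≤ c l) (p q : ℕ) :
    ‖prodDesc B p q‖ ≤ ∏ l ∈ Icc p q, c l := by
  rcases lt_or_ge q p with hqp | hpq
  · rw [prodDesc_of_lt B hqp, Icc_eq_empty_of_lt hqp, prod_empty]
    exact ContinuousLinearMap.norm_id_le
  induction q, hpq using Nat.le_induction with
  | base => simpa [prodDesc_self] using hc p
  | succ q hpq ih =>
    rw [prodDesc_succ B (by omega), prod_Icc_succ_top (by omega), mul_comm]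
    exact (norm_mul_le _ _).trans
      (mul_le_mul (hc _) ih (norm_nonneg _) ((norm_nonneg _).trans (hc _)))

end ProdDesc

lemma sum_mul_prod_Ico_one_sub {R : Type*} [CommRing R] (a : ℕ → R) {M n : ℕ} (h : M ≤ n) :
    ∑ j ∈ Ico M n, a j * ∏ l ∈ Ico (j + 1) n, (1 - a l) = 1 - ∏ l ∈ Ico M n, (1 - a l) := by
  induction n, h using Nat.le_induction with
  | base => simp
  | succ n hMn ih =>
    have hsplit : ∀ j ∈ Ico M n, a j * ∏ l ∈ Ico (j + 1) (n + 1), (1 - a l)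
        = a j * (∏ l ∈ Ico (j + 1) n, (1 - a l)) * (1 - a n) := fun j hj => by
      rw [prod_Ico_succ_top (by simp at hj; omega), mul_assoc]
    rw [sum_Ico_succ_top hMn, sum_congr rfl hsplit, ← sum_mul, ih, prod_Ico_succ_top hMn,
      Ico_self, prod_empty]
    ring

lemma sum_Ico_mul_prod_Ico_le {a b w : ℕ → ℝ} {M n : ℕ} {δ : ℝ} (hMn : M ≤ n) (hδ : 0 ≤ δ)
    (hb : ∀ l, M ≤ l → 0 ≤ b l ∧ b l ≤ 1 - a l) (hw : ∀ j, M ≤ j → 0 ≤ w j ∧ w j ≤ δ * a j) :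
    ∑ j ∈ Ico M n, w j * ∏ l ∈ Ico (j + 1) n, b l ≤ δ := by
  have hprod : ∀ j, M ≤ j → 0 ≤ ∏ l ∈ Ico j n, b l ∧
      ∏ l ∈ Ico j n, b l ≤ ∏ l ∈ Ico j n, (1 - a l) := fun j hj =>
    ⟨prod_nonneg fun l hl => (hb l (hj.trans (mem_Ico.1 hl).1)).1,
      prod_le_prod (fun l hl => (hb l (hj.trans (mem_Ico.1 hl).1)).1)
        fun l hl => (hb l (hj.trans (mem_Ico.1 hl).1)).2⟩
  calc ∑ j ∈ Ico M n, w j * ∏ l ∈ Ico (j + 1) n, b l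
      ≤ ∑ j ∈ Ico M n, δ * a j * ∏ l ∈ Ico (j + 1) n, (1 - a l) := by
        refine sum_le_sum fun j hj => ?_
        have hj := (mem_Ico.1 hj).1
        exact mul_le_mul (hw j hj).2 (hprod (j + 1) (by omega)).2 (hprod (j + 1) (by omega)).1
          ((hw j hj).1.trans (hw j hj).2)
    _ = δ * (1 - ∏ l ∈ Ico M n, (1 - a l)) := by
        simp_rw [mul_assoc, ← mul_sum, sum_mul_prod_Ico_one_sub a hMn]
    _ ≤ δ := by
        have := prod_nonneg fun l (hl : l ∈ Ico M n) => (hb l (mem_Ico.1 hl).1).1.trans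
          (hb l (mem_Ico.1 hl).1).2
        nlinarith

lemma tendsto_prod_Ico_one_sub_of_not_summable {a : ℕ → ℝ} (ha : ∀ l, 0 ≤ a l)
    (hna : ¬ Summable a) {M : ℕ} (ha₁ : ∀ l, M ≤ l → a l ≤ 1) :
    Tendsto (fun n => ∏ l ∈ Ico M n, (1 - a l)) atTop (𝓝 0) := by
  have hsum : Tendsto (fun n => ∑ l ∈ Ico M n, a l) atTop atTop := by
    refine (tendsto_atTop_add_const_right _ (-∑ l ∈ range M, a l)
      ((not_summable_iff_tendsto_nat_atTop_of_nonneg ha).1 hna)).congr' ?_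
    filter_upwards [eventually_ge_atTop M] with n hn
    rw [sum_Ico_eq_sub _ hn, sub_eq_add_neg]
  refine squeeze_zero (fun n => prod_nonneg fun l hl => ?_) (fun n => ?_)
    (Real.tendsto_exp_atBot.comp (tendsto_neg_atTop_atBot.comp hsum))
  · exact sub_nonneg.2 (ha₁ l (mem_Ico.1 hl).1)
  · rw [Function.comp_apply, Function.comp_apply, ← sum_neg_distrib, Real.exp_sum]
    exact prod_le_prod (fun l hl => sub_nonneg.2 (ha₁ l (mem_Ico.1 hl).1))
      fun l _ => Real.one_sub_le_exp_neg _

theorem tendsto_sum_mul_prod_Ico_of_isLittleO {a b w : ℕ → ℝ} (ha : ∀ l, 0 ≤ a l)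
    (hna : ¬ Summable a) (hb : ∀ l, 0 ≤ b l) (hba : ∀ᶠ l in atTop, b l ≤ 1 - a l)
    (hw : ∀ j, 0 ≤ w j) (hwa : w =o[atTop] a) :
    Tendsto (fun n => ∑ j ∈ range n, w j * ∏ l ∈ Ico (j + 1) n, b l) atTop (𝓝 0) := by
  refine tendsto_order.2 ⟨fun ε hε => Eventually.of_forall fun n =>
    hε.trans_le (sum_nonneg fun j _ => mul_nonneg (hw j) (prod_nonneg fun l _ => hb l)),
    fun ε hε => ?_⟩
  obtain ⟨M, hM⟩ := eventually_atTop.1 (hba.and (hwa.bound (half_pos hε)))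
  have hwM : ∀ j, M ≤ j → 0 ≤ w j ∧ w j ≤ ε / 2 * a j := fun j hj =>
    ⟨hw j, by simpa [abs_of_nonneg (hw j), abs_of_nonneg (ha j)] using (hM j hj).2⟩
  have hbM : ∀ l, M ≤ l → 0 ≤ b l ∧ b l ≤ 1 - a l := fun l hl => ⟨hb l, (hM l hl).1⟩
  set K := ∑ j ∈ range M, w j * ∏ l ∈ Ico (j + 1) M, b l
  have hK : 0 ≤ K := sum_nonneg fun j _ => mul_nonneg (hw j) (prod_nonneg fun l _ => hb l)
  have hhead : Tendsto (fun n => K * ∏ l ∈ Ico M n, (1 - a l)) atTop (𝓝 0) := by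
    simpa using (tendsto_prod_Ico_one_sub_of_not_summable ha hna
      fun l hl => by linarith [(hbM l hl).1, (hbM l hl).2]).const_mul K
  filter_upwards [eventually_ge_atTop M, hhead.eventually_lt_const (half_pos hε)]
    with n hn hKn
  have head : ∑ j ∈ range M, w j * ∏ l ∈ Ico (j + 1) n, b l
      ≤ K * ∏ l ∈ Ico M n, (1 - a l) := by
    have hsplit : ∀ j ∈ range M, w j * ∏ l ∈ Ico (j + 1) n, b l
        = w j * (∏ l ∈ Ico (j + 1) M, b l) * ∏ l ∈ Ico M n, b l := fun j hj => by
      rw [mul_assoc, prod_Ico_consecutive _ (mem_range.1 hj) hn]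
    rw [sum_congr rfl hsplit, ← sum_mul]
    exact mul_le_mul_of_nonneg_left (prod_le_prod (fun l _ => hb l)
      fun l hl => (hbM l (mem_Ico.1 hl).1).2) hK
  calc ∑ j ∈ range n, w j * ∏ l ∈ Ico (j + 1) n, b l
      = ∑ j ∈ range M, w j * ∏ l ∈ Ico (j + 1) n, b l
        + ∑ j ∈ Ico M n, w j * ∏ l ∈ Ico (j + 1) n, b l := (sum_range_add_sum_Ico _ hn).symm
    _ < ε / 2 + ε / 2 := add_lt_add_of_lt_of_le (head.trans_lt hKn)
        (sum_Ico_mul_prod_Ico_le hn (half_pos hε).le hbM hwM)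
    _ = ε := add_halves ε

section Operator

variable {E : Type*} [NormedAddCommGroup E] [InnerProductSpace ℝ E]

lemma exists_pos_mul_norm_sq_le_inner [FiniteDimensional ℝ E] (A : E →L[ℝ] E)
    (hA : ∀ x, x ≠ 0 → 0 < ⟪A x, x⟫) : ∃ c > 0, ∀ x, c * ‖x‖ ^ 2 ≤ ⟪A x, x⟫ := by
  rcases subsingleton_or_nontrivial E with hE | hE
  · exact ⟨1, one_pos, fun x => by simp [Subsingleton.elim x 0]⟩
  obtain ⟨x₀, hx₀, hmin⟩ := (isCompact_sphere (0 : E) 1).exists_isMinOn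
    (NormedSpace.sphere_nonempty.2 zero_le_one)
    (Continuous.inner (𝕜 := ℝ) A.continuous continuous_id').continuousOn
  have hx₀ : ‖x₀‖ = 1 := by simpa using hx₀
  refine ⟨⟪A x₀, x₀⟫, hA x₀ (norm_ne_zero_iff.1 (by simp [hx₀])), fun x => ?_⟩
  rcases eq_or_ne x 0 with rfl | hx
  · simp
  have hxpos : 0 < ‖x‖ := norm_pos_iff.2 hx
  have := isMinOn_iff.1 hmin (‖x‖⁻¹ • x) (by simp [norm_smul, hxpos.ne'])
  rw [map_smul, real_inner_smul_left, real_inner_smul_right, ← mul_assoc, ← sq, inv_pow,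
    le_inv_mul_iff₀ (by positivity), mul_comm] at this
  exact this

lemma norm_one_sub_smul_add_smul_one_le {A : E →L[ℝ] E} {c t : ℝ}
    (hA : ∀ x, c * ‖x‖ ^ 2 ≤ ⟪A x, x⟫) (ht : 0 ≤ t) (htA : t * ‖A‖ ^ 2 ≤ c) (htc : t * c ≤ 2)
    (s : ℝ) : ‖1 - t • A + s • 1‖ ≤ 1 - t * c / 2 + |s| := by
  have hmain : ‖1 - t • A‖ ≤ 1 - t * c / 2 := by
    refine ContinuousLinearMap.opNorm_le_bound _ (by linarith) fun x => ?_
    have hsq : ‖x - t • A x‖ ^ 2 ≤ ((1 - t * c / 2) * ‖x‖) ^ 2 := by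
      have hAx : ‖A x‖ ^ 2 ≤ ‖A‖ ^ 2 * ‖x‖ ^ 2 := by
        rw [← mul_pow]; exact pow_le_pow_left₀ (norm_nonneg _) (A.le_opNorm x) 2
      rw [norm_sub_sq_real, real_inner_smul_right, real_inner_comm, norm_smul,
        Real.norm_of_nonneg ht]
      -- `‖x - t A x‖² ≤ (1 - 2tc + t²‖A‖²) ‖x‖² ≤ (1 - tc) ‖x‖² ≤ (1 - tc/2)² ‖x‖²`
      nlinarith [hA x, mul_le_mul_of_nonneg_left hAx (sq_nonneg t),
        mul_le_mul_of_nonneg_right htA (mul_nonneg ht (sq_nonneg ‖x‖)),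
        sq_nonneg (t * c * ‖x‖)]
    simpa using (abs_le_of_sq_le_sq' hsq (by nlinarith [norm_nonneg x])).2
  calc ‖1 - t • A + s • 1‖ ≤ ‖1 - t • A‖ + ‖s • (1 : E →L[ℝ] E)‖ := norm_add_le _ _
    _ ≤ 1 - t * c / 2 + |s| * 1 := add_le_add hmain ((norm_smul_le s (1 : E →L[ℝ] E)).trans
        (mul_le_mul_of_nonneg_left ContinuousLinearMap.norm_id_le (norm_nonneg s)))
    _ = 1 - t * c / 2 + |s| := by rw [mul_one]

lemma eventually_norm_one_sub_smul_add_smul_one_le {ι : Type*} {L : Filter ι}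
    {A : E →L[ℝ] E} {c : ℝ} {t s : ι → ℝ} (hA : ∀ x, c * ‖x‖ ^ 2 ≤ ⟪A x, x⟫) (hc : 0 < c)
    (ht₀ : ∀ i, 0 ≤ t i) (ht : Tendsto t L (𝓝 0)) (hs : ∀ᶠ i in L, |s i| ≤ c / 4 * t i) :
    ∀ᶠ i in L, ‖1 - t i • A + s i • 1‖ ≤ 1 - c / 4 * t i := by
  filter_upwards [(ht.mul_const (‖A‖ ^ 2)).eventually_lt_const (by rwa [zero_mul]),
    (ht.mul_const c).eventually_lt_const (by rw [zero_mul]; norm_num : 0 * c < 2), hs]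
    with i htA htc hsi
  linarith [norm_one_sub_smul_add_smul_one_le hA (ht₀ i) htA.le htc.le (s i)]

end Operator

lemma isLittleO_natCast_rpow_neg {χ θ : ℝ} (h : χ < θ) :
    (fun n : ℕ => (n : ℝ) ^ (-θ)) =o[atTop] fun n => (n : ℝ) ^ (-χ) := by
  refine isLittleO_iff_exists_eq_mul.2 ⟨fun n => (n : ℝ) ^ (-(θ - χ)), ?_, ?_⟩
  · exact (tendsto_rpow_neg_atTop (sub_pos.2 h)).comp tendsto_natCast_atTop_atTop
  · filter_upwards [eventually_gt_atTop 0] with n hn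
    rw [Pi.mul_apply, ← Real.rpow_add (Nat.cast_pos.2 hn)]
    ring_nf

lemma norm_sum_smul_prodDesc_apply_le {d : ℕ}
    (B : ℕ → EuclideanSpace ℝ (Fin d) →L[ℝ] EuclideanSpace ℝ (Fin d)) (η : ℕ → ℝ) (χ : ℝ)
    (h : EuclideanSpace ℝ (Fin d)) (n : ℕ) :
    ‖∑ j ∈ Icc 1 (n - 1), (η j * (j : ℝ) ^ χ) • ((j : ℝ) ^ (-χ) • prodDesc B (j + 1) (n - 1) h)‖
      ≤ ‖h‖ * ∑ j ∈ range n, |η j| * ∏ l ∈ Ico (j + 1) n, ‖B l‖ := by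
  have hterm : ∀ j ∈ Icc 1 (n - 1),
      ‖(η j * (j : ℝ) ^ χ) • ((j : ℝ) ^ (-χ) • prodDesc B (j + 1) (n - 1) h)‖
        ≤ ‖h‖ * (|η j| * ∏ l ∈ Ico (j + 1) n, ‖B l‖) := by
    intro j hj
    have hj₀ : (0 : ℝ) < j := Nat.cast_pos.2 (by simp at hj; omega)
    have hIcc : Icc (j + 1) (n - 1) = Ico (j + 1) n := by ext; simp; omega
    rw [smul_smul, mul_assoc, ← Real.rpow_add hj₀, add_neg_cancel, Real.rpow_zero, mul_one,
      norm_smul, Real.norm_eq_abs, mul_left_comm]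
    gcongr
    calc ‖prodDesc B (j + 1) (n - 1) h‖ ≤ ‖prodDesc B (j + 1) (n - 1)‖ * ‖h‖ :=
          ContinuousLinearMap.le_opNorm _ _
      _ ≤ (∏ l ∈ Ico (j + 1) n, ‖B l‖) * ‖h‖ := by
          gcongr
          exact hIcc ▸ norm_prodDesc_le B (fun l => le_rfl) _ _
      _ = ‖h‖ * ∏ l ∈ Ico (j + 1) n, ‖B l‖ := mul_comm _ _
  calc _ ≤ ∑ j ∈ Icc 1 (n - 1), ‖h‖ * (|η j| * ∏ l ∈ Ico (j + 1) n, ‖B l‖) :=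
        norm_sum_le_of_le _ hterm
    _ ≤ ∑ j ∈ range n, ‖h‖ * (|η j| * ∏ l ∈ Ico (j + 1) n, ‖B l‖) :=
        sum_le_sum_of_subset_of_nonneg (fun j hj => by simp at hj ⊢; omega)
          fun j _ _ => by positivity
    _ = _ := (mul_sum _ _ _).symm

theorem stmt_8_general (d : ℕ) (χ θ η' : ℝ) (hχ : χ ∈ Set.Ioo (0 : ℝ) 1)
    (hθ : θ ∈ Set.Ioc χ 1)
    (η : ℕ → ℝ) (hη : ∀ l : ℕ, 1 ≤ l → 0 ≤ η l ∧ η l ≤ η' * (l : ℝ) ^ (-θ))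
    (A : EuclideanSpace ℝ (Fin d) →L[ℝ] EuclideanSpace ℝ (Fin d))
    (hApos : ∀ x : EuclideanSpace ℝ (Fin d), x ≠ 0 → 0 < ⟪A x, x⟫)
    (h : EuclideanSpace ℝ (Fin d)) :
    Tendsto (fun n : ℕ =>
        ‖∑ j ∈ Icc 1 (n - 1), (η j * (j : ℝ) ^ χ) • ((j : ℝ) ^ (-χ) •
          (prodDesc (fun l => 1 - (l : ℝ) ^ (-χ) • A + η l • 1) (j + 1) (n - 1)) h)‖)
      atTop (𝓝 0) := by
  obtain ⟨hχ₀, hχ₁⟩ := hχ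
  obtain ⟨c, hc, hcA⟩ := exists_pos_mul_norm_sq_le_inner A hApos
  have hna : ¬ Summable fun l : ℕ => c / 4 * (l : ℝ) ^ (-χ) := by
    rw [summable_mul_left_iff (by positivity), Real.summable_nat_rpow]
    linarith
  have hηa : (fun j => |η j|) =o[atTop] fun l : ℕ => c / 4 * (l : ℝ) ^ (-χ) := by
    refine ((IsBigO.of_bound η' ?_).trans_isLittleO (isLittleO_natCast_rpow_neg hθ.1))
      |>.const_mul_right (by positivity)
    filter_upwards [eventually_ge_atTop 1] with l hl
    simpa [abs_of_nonneg (hη l hl).1, abs_of_nonneg (Real.rpow_nonneg l.cast_nonneg (-θ))]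
      using (hη l hl).2
  have hB := eventually_norm_one_sub_smul_add_smul_one_le (s := η) hcA hc
    (fun l => Real.rpow_nonneg (Nat.cast_nonneg l) (-χ))
    ((tendsto_rpow_neg_atTop hχ₀).comp tendsto_natCast_atTop_atTop) <| by
      filter_upwards [hηa.bound one_pos] with l hl
      rwa [one_mul, Real.norm_eq_abs, Real.norm_eq_abs, abs_abs,
        abs_of_nonneg (a := c / 4 * (l : ℝ) ^ (-χ)) (by positivity)] at hl
  have hlim := (tendsto_sum_mul_prod_Ico_of_isLittleO (fun l => by positivity) hna
    (fun l => norm_nonneg _) hB (fun j => abs_nonneg _) hηa).const_mul ‖h‖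
  rw [mul_zero] at hlim
  exact squeeze_zero (fun n => norm_nonneg _) (norm_sum_smul_prodDesc_apply_le _ η χ h) hlim

/-- Lemma 2 ii), second part: with `F_{j,n} = j^{-χ} ∏_{l=j+1}^{n−1}(I − l^{-χ}A + η_l I)`
and `F̄_{j,n} = η_j j^χ F_{j,n}`, for every fixed `h`, `|Σ_{j=1}^{n−1} F̄_{j,n} h| → 0`. -/
theorem stmt_8 (d : ℕ) (hd : 0 < d) (χ θ η' : ℝ) (hχ : χ ∈ Set.Ioo (0 : ℝ) 1)
    (hθ : θ ∈ Set.Ioc χ 1) (hη' : 0 < η')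
    (η : ℕ → ℝ) (hη : ∀ l : ℕ, 1 ≤ l → 0 ≤ η l ∧ η l ≤ η' * (l : ℝ) ^ (-θ))
    (A : EuclideanSpace ℝ (Fin d) →L[ℝ] EuclideanSpace ℝ (Fin d))
    (hAsym : ∀ x y : EuclideanSpace ℝ (Fin d), ⟪A x, y⟫ = ⟪x, A y⟫)
    (hApos : ∀ x : EuclideanSpace ℝ (Fin d), x ≠ 0 → 0 < ⟪A x, x⟫)
    (h : EuclideanSpace ℝ (Fin d)) :
    Tendsto (fun n : ℕ =>
        ‖∑ j ∈ Icc 1 (n - 1), (η j * (j : ℝ) ^ χ) • ((j : ℝ) ^ (-χ) •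
          (prodDesc (fun l => 1 - (l : ℝ) ^ (-χ) • A + η l • 1) (j + 1) (n - 1)) h)‖)
      atTop (𝓝 0) :=
  stmt_8_general d χ θ η' hχ hθ η hη A hApos h
end

section
/- Let χ ∈ (0,1), θ ∈ (χ,1], η̄ > 0, a > 0, and define n_k = ⌊(ak)^{1/(1−χ)}⌋ and I_k = {n_k, …, n_{k+1}−1}. Let A be a symmetric positive-definite real d×d matrix, {Â_l} symmetric positive-semidefinite d×d matrices with ‖n^{-χ} Σ_{l=1}^n (Â_l − A)‖ → 0 as n → ∞, and {η_l} real numbers with 0 ≤ η_l ≤ η̄ l^{-θ}. Then the sequence ∏_{l∈I_k} (1 + l^{-χ}‖Â_l‖ + η_l), k = 0,1,2,…, is bounded. -/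
open Filter Finset Module
open scoped RealInnerProductSpace Topology

/-! Since `1 + x ≤ exp x`, it suffices to bound the block sums `∑_{l ∈ I_k} (l^{-χ}‖Â_l‖ + η_l)`.
On `I_k = [m, m')` every weight is at most `m^{-χ}` (also `η_l ≤ η̄ l^{-θ} ≤ η̄ l^{-χ}`), and for
positive semidefinite operators `∑ ‖Â_l‖ ≤ d ‖∑ Â_l‖`, because the norm of a positive operator is
at most its trace. The hypothesis gives `∑_{l<n} (Â_l - A) = O(n^χ)`, hence
`‖∑_{l ∈ I_k} Â_l‖ ≤ |I_k| ‖A‖ + O(m'^χ)`. Finally `|I_k| = O(m^χ)` and `m' = O(m)`: by concavity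
of `s ↦ s^{1-χ}`, whose value at `(ak)^{1/(1-χ)}` grows by exactly `a` from one block to the next.
-/

namespace ContinuousLinearMap

variable {E : Type*} [NormedAddCommGroup E] [InnerProductSpace ℝ E] [FiniteDimensional ℝ E]

lemma IsPositive.inner_le_trace {T : E →L[ℝ] E} (hT : T.IsPositive) {u : E} (hu : ‖u‖ = 1) :
    ⟪T u, u⟫ ≤ LinearMap.trace ℝ E T := by
  classical
  have hon : Orthonormal ℝ ((↑) : ({u} : Set E) → E) := by
    rw [orthonormal_subtype_iff_ite]
    rintro v rfl w rfl
    simp [hu]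
  obtain ⟨w, b, huw, hb⟩ := hon.exists_orthonormalBasis_extension
  have hu' : u ∈ w := huw rfl
  rw [LinearMap.trace_eq_sum_inner _ b]
  calc ⟪T u, u⟫ = ⟪b ⟨u, hu'⟩, T (b ⟨u, hu'⟩)⟫ := by simp [hb, real_inner_comm]
    _ ≤ ∑ i, ⟪b i, T (b i)⟫ :=
      single_le_sum (fun i _ => hT.inner_nonneg_right _) (mem_univ _)

lemma IsPositive.norm_le_trace {T : E →L[ℝ] E} (hT : T.IsPositive) :
    ‖T‖ ≤ LinearMap.trace ℝ E T := by
  rw [T.norm_eq_iSup_rayleighQuotient hT.isSymmetric]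
  refine ciSup_le fun x => ?_
  rcases eq_or_ne x 0 with rfl | hx
  · simpa using hT.toLinearMap.trace_nonneg
  · have hu : ‖‖x‖⁻¹ • x‖ = 1 := norm_smul_inv_norm hx
    rw [← T.rayleigh_smul x (inv_ne_zero (norm_ne_zero_iff.2 hx)), rayleighQuotient,
      reApplyInnerSelf_apply, hu, one_pow, div_one, abs_of_nonneg (hT.re_inner_nonneg_left _)]
    exact hT.inner_le_trace hu

lemma trace_le_finrank_mul_norm (T : E →L[ℝ] E) :
    LinearMap.trace ℝ E T ≤ finrank ℝ E * ‖T‖ := by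
  rw [LinearMap.trace_eq_sum_inner _ (stdOrthonormalBasis ℝ E)]
  calc ∑ i, ⟪stdOrthonormalBasis ℝ E i, T (stdOrthonormalBasis ℝ E i)⟫
      ≤ ∑ _i : Fin (finrank ℝ E), ‖T‖ := sum_le_sum fun i _ => by
        simpa using (real_inner_le_norm (stdOrthonormalBasis ℝ E i) _).trans
          (mul_le_mul_of_nonneg_left (T.le_opNorm (stdOrthonormalBasis ℝ E i)) (norm_nonneg _))
    _ = finrank ℝ E * ‖T‖ := by simp

lemma sum_norm_le_finrank_mul_norm_sum {ι : Type*} (s : Finset ι) {T : ι → E →L[ℝ] E}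
    (hT : ∀ i ∈ s, (T i).IsPositive) :
    ∑ i ∈ s, ‖T i‖ ≤ finrank ℝ E * ‖∑ i ∈ s, T i‖ :=
  calc ∑ i ∈ s, ‖T i‖ ≤ ∑ i ∈ s, LinearMap.trace ℝ E (T i) :=
        sum_le_sum fun i hi => (hT i hi).norm_le_trace
    _ = LinearMap.trace ℝ E ↑(∑ i ∈ s, T i) := by simp
    _ ≤ finrank ℝ E * ‖∑ i ∈ s, T i‖ := trace_le_finrank_mul_norm _

end ContinuousLinearMap

lemma exists_norm_sum_Ico_le_mul_rpow {F : Type*} [NormedAddCommGroup F] [NormedSpace ℝ F]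
    {χ : ℝ} (hχ : 0 ≤ χ) {f : ℕ → F}
    (hf : Tendsto (fun n : ℕ => ‖(n : ℝ) ^ (-χ) • ∑ l ∈ Icc 1 n, f l‖) atTop (𝓝 0)) :
    ∃ B, 0 ≤ B ∧ ∀ m m' : ℕ, 1 ≤ m → ‖∑ l ∈ Ico m m', f l‖ ≤ B * (m' : ℝ) ^ χ := by
  obtain ⟨B, hB⟩ := hf.bddAbove_range
  have hB0 : 0 ≤ B := (norm_nonneg _).trans (hB ⟨0, rfl⟩)
  have hIcc : ∀ n : ℕ, ‖∑ l ∈ Icc 1 n, f l‖ ≤ B * (n : ℝ) ^ χ := by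
    intro n
    rcases Nat.eq_zero_or_pos n with rfl | hn
    · simpa using mul_nonneg hB0 (Real.rpow_nonneg le_rfl χ)
    have hn' : (0 : ℝ) < n := Nat.cast_pos.2 hn
    have h : ‖(n : ℝ) ^ (-χ) • ∑ l ∈ Icc 1 n, f l‖ ≤ B := hB ⟨n, rfl⟩
    rwa [norm_smul, Real.norm_of_nonneg (by positivity), Real.rpow_neg hn'.le,
      inv_mul_le_iff₀ (by positivity), mul_comm] at h
  have hIco : ∀ n : ℕ, ‖∑ l ∈ Ico 1 n, f l‖ ≤ B * (n : ℝ) ^ χ := by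
    intro n
    have hIco_eq : Ico 1 n = Icc 1 (n - 1) := by ext; simp; omega
    rw [hIco_eq]
    refine (hIcc _).trans (mul_le_mul_of_nonneg_left ?_ hB0)
    exact Real.rpow_le_rpow (Nat.cast_nonneg _) (Nat.cast_le.2 (n.sub_le 1)) hχ
  refine ⟨2 * B, by positivity, fun m m' hm => ?_⟩
  rcases le_or_gt m m' with hmm' | hm'm
  · rw [eq_sub_of_add_eq' (sum_Ico_consecutive f hm hmm')]
    have hmono : B * (m : ℝ) ^ χ ≤ B * (m' : ℝ) ^ χ :=
      mul_le_mul_of_nonneg_left (Real.rpow_le_rpow (Nat.cast_nonneg _) (Nat.cast_le.2 hmm') hχ) hB0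
    linarith [norm_sub_le (∑ l ∈ Ico 1 m', f l) (∑ l ∈ Ico 1 m, f l), hIco m, hIco m']
  · simp [Ico_eq_empty_of_le hm'm.le]
    positivity

lemma Real.mul_sub_le_rpow_sub_rpow_mul {q x y : ℝ} (hq0 : 0 ≤ q) (hq1 : q ≤ 1) (hx : 0 ≤ x)
    (hxy : x ≤ y) : q * (y - x) ≤ (y ^ q - x ^ q) * y ^ (1 - q) := by
  rcases hxy.eq_or_lt with rfl | hxy
  · simp
  have hy : 0 < y := hx.trans_lt hxy
  have hbern := rpow_one_add_le_one_add_mul_self (s := x / y - 1)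
    (by linarith [div_nonneg hx hy.le]) hq0 hq1
  rw [add_sub_cancel, Real.div_rpow hx hy.le] at hbern
  have hyy : y ^ q * y ^ (1 - q) = y := by
    rw [← Real.rpow_add hy, add_sub_cancel, Real.rpow_one]
  have hxy' : x ^ q * y ^ (1 - q) = x ^ q / y ^ q * y := by
    have hyq : y ^ q ≠ 0 := (Real.rpow_pos_of_pos hy q).ne'
    calc x ^ q * y ^ (1 - q) = x ^ q / y ^ q * (y ^ q * y ^ (1 - q)) := by field_simp
      _ = x ^ q / y ^ q * y := by rw [hyy]
  calc q * (y - x) = y - (1 + q * (x / y - 1)) * y := by field_simp; ring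
    _ ≤ y - x ^ q / y ^ q * y := by gcongr
    _ = (y ^ q - x ^ q) * y ^ (1 - q) := by rw [sub_mul, hyy, hxy']

lemma exists_natFloor_rpow_add_sub_le {χ a : ℝ} (hχ0 : 0 ≤ χ) (hχ1 : χ < 1) (ha : 0 ≤ a) :
    ∃ C, 0 ≤ C ∧ ∀ t, max 2 a ≤ t →
      1 ≤ ⌊t ^ (1 / (1 - χ))⌋₊ ∧
      ((⌊(t + a) ^ (1 / (1 - χ))⌋₊ - ⌊t ^ (1 / (1 - χ))⌋₊ : ℕ) : ℝ) ≤
        C * (⌊t ^ (1 / (1 - χ))⌋₊ : ℝ) ^ χ := by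
  set q := 1 - χ with hq
  have hq0 : 0 < q := by linarith
  have hp1 : 1 ≤ 1 / q := one_le_one_div hq0 (by linarith)
  refine ⟨a / q * (2 ^ (1 / q + 1)) ^ χ + 1, by positivity, fun t ht => ?_⟩
  have ht2 : 2 ≤ t := le_of_max_le_left ht
  have hat : a ≤ t := le_of_max_le_right ht
  have hconc : q * ((t + a) ^ (1 / q) - t ^ (1 / q)) ≤ a * ((t + a) ^ (1 / q)) ^ χ := by
    have h := Real.mul_sub_le_rpow_sub_rpow_mul hq0.le (by linarith) (by positivity)
      (Real.rpow_le_rpow (by linarith) (by linarith : t ≤ t + a) (by positivity : 0 ≤ 1 / q))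
    rwa [one_div, Real.rpow_inv_rpow (by linarith) hq0.ne',
      Real.rpow_inv_rpow (by linarith) hq0.ne', add_sub_cancel_left,
      show 1 - q = χ by rw [hq]; ring, ← one_div] at h
  set x := t ^ (1 / q)
  set y := (t + a) ^ (1 / q)
  set m := ⌊x⌋₊
  set m' := ⌊y⌋₊
  have htx : t ≤ x := Real.self_le_rpow_of_one_le (by linarith) hp1
  have hxy : x ≤ y := Real.rpow_le_rpow (by linarith) (by linarith) (by positivity)
  have hm : 1 ≤ m := Nat.le_floor (by push_cast; linarith)
  have hxm : x ≤ 2 * m := by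
    have := Nat.lt_floor_add_one x
    have : (1 : ℝ) ≤ m := Nat.one_le_cast.2 hm
    linarith
  have hyx : y ≤ 2 ^ (1 / q + 1) * m := by
    calc y ≤ (2 * t) ^ (1 / q) := Real.rpow_le_rpow (by linarith) (by linarith) (by positivity)
      _ = 2 ^ (1 / q) * x := Real.mul_rpow (by norm_num) (by linarith)
      _ ≤ 2 ^ (1 / q) * (2 * m) := by gcongr
      _ = 2 ^ (1 / q + 1) * m := by rw [Real.rpow_add_one two_ne_zero]; ring
  have hyχ : y ^ χ ≤ (2 ^ (1 / q + 1)) ^ χ * (m : ℝ) ^ χ := by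
    rw [← Real.mul_rpow (by positivity) (by positivity)]
    exact Real.rpow_le_rpow (by positivity) hyx hχ0
  have hgap : ((m' - m : ℕ) : ℝ) ≤ y - x + 1 := by
    rw [Nat.cast_sub (Nat.floor_mono hxy)]
    linarith [Nat.floor_le (show 0 ≤ y by positivity), Nat.lt_floor_add_one x]
  have hmχ : 1 ≤ (m : ℝ) ^ χ := Real.one_le_rpow (Nat.one_le_cast.2 hm) hχ0
  refine ⟨hm, hgap.trans ?_⟩
  have : y - x ≤ a / q * y ^ χ := by
    rw [div_mul_eq_mul_div, le_div_iff₀ hq0]; linarith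
  have : a / q * y ^ χ ≤ a / q * ((2 ^ (1 / q + 1)) ^ χ * (m : ℝ) ^ χ) := by gcongr
  linarith

lemma Real.prod_one_add_le_exp_sum_of_nonneg {ι : Type*} (s : Finset ι) {f : ι → ℝ}
    (hf : ∀ i ∈ s, 0 ≤ f i) : ∏ i ∈ s, (1 + f i) ≤ Real.exp (∑ i ∈ s, f i) := by
  rw [← prod_coe_sort, ← sum_coe_sort]
  exact Real.prod_one_add_le_exp_sum _ fun i => hf i i.2

lemma sum_Ico_rpow_neg_mul_le {χ : ℝ} (hχ : 0 ≤ χ) {m : ℕ} (hm : 1 ≤ m) (m' : ℕ) {u : ℕ → ℝ}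
    (hu : ∀ l ∈ Ico m m', 0 ≤ u l) :
    ∑ l ∈ Ico m m', (l : ℝ) ^ (-χ) * u l ≤ (m : ℝ) ^ (-χ) * ∑ l ∈ Ico m m', u l := by
  rw [mul_sum]
  refine sum_le_sum fun l hl => mul_le_mul_of_nonneg_right ?_ (hu l hl)
  exact Real.rpow_le_rpow_of_nonpos (by exact_mod_cast hm) (Nat.cast_le.2 (mem_Ico.1 hl).1)
    (by linarith)

lemma sum_Ico_le_rpow_neg_mul_card {χ θ η' : ℝ} (hχ : 0 ≤ χ) (hχθ : χ ≤ θ) (hη' : 0 ≤ η')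
    {η : ℕ → ℝ} (hη : ∀ l : ℕ, 1 ≤ l → η l ≤ η' * (l : ℝ) ^ (-θ)) {m : ℕ} (hm : 1 ≤ m)
    (m' : ℕ) : ∑ l ∈ Ico m m', η l ≤ (m : ℝ) ^ (-χ) * ((m' - m : ℕ) * η') :=
  calc ∑ l ∈ Ico m m', η l ≤ ∑ l ∈ Ico m m', (l : ℝ) ^ (-χ) * η' := by
        refine sum_le_sum fun l hl => ?_
        have hl1 : 1 ≤ l := hm.trans (mem_Ico.1 hl).1
        calc η l ≤ η' * (l : ℝ) ^ (-θ) := hη l hl1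
          _ ≤ (l : ℝ) ^ (-χ) * η' := by
            rw [mul_comm]; gcongr; exact Nat.one_le_cast.2 hl1
    _ ≤ (m : ℝ) ^ (-χ) * ((m' - m : ℕ) * η') := by
        simpa using sum_Ico_rpow_neg_mul_le hχ hm m' fun _ _ => hη'

lemma natCast_rpow_le_one_add_mul_rpow {χ C : ℝ} (hχ0 : 0 ≤ χ) (hχ1 : χ ≤ 1) (hC0 : 0 ≤ C)
    {m m' : ℕ} (hm : 1 ≤ m) (hgap : ((m' - m : ℕ) : ℝ) ≤ C * (m : ℝ) ^ χ) :
    (m' : ℝ) ^ χ ≤ (1 + C) * (m : ℝ) ^ χ := by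
  have hm1 : (1 : ℝ) ≤ m := Nat.one_le_cast.2 hm
  have hm'le : (m' : ℝ) ≤ (1 + C) * m := by
    have : (m' : ℝ) ≤ m + (m' - m : ℕ) := by exact_mod_cast le_add_tsub
    nlinarith [Real.rpow_le_self_of_one_le hm1 hχ1]
  calc (m' : ℝ) ^ χ ≤ ((1 + C) * m) ^ χ := Real.rpow_le_rpow (by positivity) hm'le hχ0
    _ = (1 + C) ^ χ * (m : ℝ) ^ χ := Real.mul_rpow (by positivity) (by positivity)
    _ ≤ (1 + C) * (m : ℝ) ^ χ := by
      gcongr; exact Real.rpow_le_self_of_one_le (by linarith) hχ1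

section Block

variable {E : Type*} [NormedAddCommGroup E] [InnerProductSpace ℝ E] [FiniteDimensional ℝ E]

lemma sum_Ico_norm_le {A : E →L[ℝ] E} {Ah : ℕ → E →L[ℝ] E} (hpos : ∀ l, (Ah l).IsPositive)
    (m m' : ℕ) :
    ∑ l ∈ Ico m m', ‖Ah l‖ ≤ finrank ℝ E * ((m' - m : ℕ) * ‖A‖ + ‖∑ l ∈ Ico m m', (Ah l - A)‖) := by
  refine (ContinuousLinearMap.sum_norm_le_finrank_mul_norm_sum _ fun l _ => hpos l).trans ?_
  gcongr
  have hsplit : ∑ l ∈ Ico m m', Ah l = (m' - m) • A + ∑ l ∈ Ico m m', (Ah l - A) := by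
    simp [sum_sub_distrib]
  rw [hsplit]
  exact (norm_add_le _ _).trans (by gcongr; exact norm_nsmul_le)

lemma sum_block_le {χ θ η' B C : ℝ} (hχ0 : 0 ≤ χ) (hχ1 : χ ≤ 1) (hχθ : χ ≤ θ) (hη' : 0 ≤ η')
    (hB0 : 0 ≤ B) (hC0 : 0 ≤ C) {A : E →L[ℝ] E} {Ah : ℕ → E →L[ℝ] E}
    (hpos : ∀ l, (Ah l).IsPositive) {η : ℕ → ℝ}
    (hη : ∀ l : ℕ, 1 ≤ l → η l ≤ η' * (l : ℝ) ^ (-θ)) {m m' : ℕ} (hm : 1 ≤ m)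
    (hB : ‖∑ l ∈ Ico m m', (Ah l - A)‖ ≤ B * (m' : ℝ) ^ χ)
    (hgap : ((m' - m : ℕ) : ℝ) ≤ C * (m : ℝ) ^ χ) :
    ∑ l ∈ Ico m m', ((l : ℝ) ^ (-χ) * ‖Ah l‖ + η l) ≤
      finrank ℝ E * (C * ‖A‖ + B * (1 + C)) + η' * C := by
  have hm1 : (1 : ℝ) ≤ m := Nat.one_le_cast.2 hm
  set w := (m : ℝ) ^ χ
  have hw : 0 < w := Real.rpow_pos_of_pos (by linarith) χ
  have hm' := natCast_rpow_le_one_add_mul_rpow hχ0 hχ1 hC0 hm hgap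
  have hη_sum := sum_Ico_le_rpow_neg_mul_card hχ0 hχθ hη' hη hm m'
  have hnorm := sum_Ico_norm_le (A := A) hpos m m'
  have hAh := sum_Ico_rpow_neg_mul_le hχ0 hm m' fun l _ => norm_nonneg (Ah l)
  rw [Real.rpow_neg (by linarith)] at hAh hη_sum
  have hbound :
      finrank ℝ E * ((m' - m : ℕ) * ‖A‖ + ‖∑ l ∈ Ico m m', (Ah l - A)‖) + (m' - m : ℕ) * η' ≤
        (finrank ℝ E * (C * ‖A‖ + B * (1 + C)) + η' * C) * w :=
    calc _ ≤ finrank ℝ E * (C * w * ‖A‖ + B * ((1 + C) * w)) + C * w * η' := by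
          gcongr; exact hB.trans (by gcongr)
      _ = _ := by ring
  calc ∑ l ∈ Ico m m', ((l : ℝ) ^ (-χ) * ‖Ah l‖ + η l)
      ≤ w⁻¹ * (finrank ℝ E * ((m' - m : ℕ) * ‖A‖ + ‖∑ l ∈ Ico m m', (Ah l - A)‖)
          + (m' - m : ℕ) * η') := by
        rw [sum_add_distrib, mul_add]
        exact add_le_add (hAh.trans (mul_le_mul_of_nonneg_left hnorm (by positivity))) hη_sum
    _ ≤ w⁻¹ * ((finrank ℝ E * (C * ‖A‖ + B * (1 + C)) + η' * C) * w) := by gcongr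
    _ = finrank ℝ E * (C * ‖A‖ + B * (1 + C)) + η' * C := by field_simp

end Block

lemma exists_forall_le_of_eventually_le {f : ℕ → ℝ} {M : ℝ} (h : ∀ᶠ k in atTop, f k ≤ M) :
    ∃ K, ∀ k, f k ≤ K :=
  let ⟨K, hK⟩ := (isBoundedUnder_of_eventually_le h).bddAbove_range
  ⟨K, fun k => hK ⟨k, rfl⟩⟩

theorem stmt_11_general (d : ℕ) (χ θ η' a : ℝ) (hχ : χ ∈ Set.Ioo (0 : ℝ) 1)
    (hθ : θ ∈ Set.Ioc χ 1) (hη' : 0 < η') (ha : 0 < a)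
    (A : EuclideanSpace ℝ (Fin d) →L[ℝ] EuclideanSpace ℝ (Fin d))
    (Ah : ℕ → EuclideanSpace ℝ (Fin d) →L[ℝ] EuclideanSpace ℝ (Fin d))
    (hAhsym : ∀ (l : ℕ) (x y : EuclideanSpace ℝ (Fin d)), ⟪Ah l x, y⟫ = ⟪x, Ah l y⟫)
    (hAhpsd : ∀ (l : ℕ) (x : EuclideanSpace ℝ (Fin d)), 0 ≤ ⟪Ah l x, x⟫)
    (hcoefA : Tendsto (fun n : ℕ => ‖(n : ℝ) ^ (-χ) • ∑ l ∈ Icc 1 n, (Ah l - A)‖)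
      atTop (𝓝 0))
    (η : ℕ → ℝ) (hη : ∀ l : ℕ, 1 ≤ l → 0 ≤ η l ∧ η l ≤ η' * (l : ℝ) ^ (-θ)) :
    ∃ K : ℝ, ∀ k : ℕ,
      ∏ l ∈ Ico (⌊(a * k) ^ (1 / (1 - χ))⌋₊) (⌊(a * (k + 1)) ^ (1 / (1 - χ))⌋₊),
        (1 + (l : ℝ) ^ (-χ) * ‖Ah l‖ + η l) ≤ K := by
  have hpos : ∀ l, (Ah l).IsPositive := fun l =>
    (ContinuousLinearMap.isPositive_iff _).2 ⟨hAhsym l, hAhpsd l⟩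
  obtain ⟨B, hB0, hB⟩ := exists_norm_sum_Ico_le_mul_rpow hχ.1.le hcoefA
  obtain ⟨C, hC0, hC⟩ := exists_natFloor_rpow_add_sub_le hχ.1.le hχ.2 ha.le
  refine exists_forall_le_of_eventually_le (M := Real.exp
    (finrank ℝ (EuclideanSpace ℝ (Fin d)) * (C * ‖A‖ + B * (1 + C)) + η' * C)) ?_
  filter_upwards [(tendsto_natCast_atTop_atTop.const_mul_atTop ha).eventually_ge_atTop
    (max 2 a)] with k hk
  obtain ⟨hm, hgap⟩ := hC _ hk
  rw [mul_add_one]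
  simp only [add_assoc]
  refine (Real.prod_one_add_le_exp_sum_of_nonneg _ fun l hl => ?_).trans
    (Real.exp_le_exp.2 (sum_block_le hχ.1.le hχ.2.le hθ.1.le hη'.le hB0 hC0 hpos
      (fun l hl => (hη l hl).2) hm (hB _ _ hm) hgap))
  exact add_nonneg (by positivity) (hη l (hm.trans (mem_Ico.1 hl).1)).1

/-- Lemma 2 v): with blocks `I_k = {n_k, …, n_{k+1}−1}`, `n_k = ⌊(ak)^{1/(1−χ)}⌋`,
the sequence `∏_{l∈I_k} (1 + l^{-χ}‖Â_l‖ + η_l)` is bounded. -/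
theorem stmt_11 (d : ℕ) (hd : 0 < d) (χ θ η' a : ℝ) (hχ : χ ∈ Set.Ioo (0 : ℝ) 1)
    (hθ : θ ∈ Set.Ioc χ 1) (hη' : 0 < η') (ha : 0 < a)
    (A : EuclideanSpace ℝ (Fin d) →L[ℝ] EuclideanSpace ℝ (Fin d))
    (hAsym : ∀ x y : EuclideanSpace ℝ (Fin d), ⟪A x, y⟫ = ⟪x, A y⟫)
    (hApos : ∀ x : EuclideanSpace ℝ (Fin d), x ≠ 0 → 0 < ⟪A x, x⟫)
    (Ah : ℕ → EuclideanSpace ℝ (Fin d) →L[ℝ] EuclideanSpace ℝ (Fin d))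
    (hAhsym : ∀ (l : ℕ) (x y : EuclideanSpace ℝ (Fin d)), ⟪Ah l x, y⟫ = ⟪x, Ah l y⟫)
    (hAhpsd : ∀ (l : ℕ) (x : EuclideanSpace ℝ (Fin d)), 0 ≤ ⟪Ah l x, x⟫)
    (hcoefA : Tendsto (fun n : ℕ => ‖(n : ℝ) ^ (-χ) • ∑ l ∈ Icc 1 n, (Ah l - A)‖)
      atTop (𝓝 0))
    (η : ℕ → ℝ) (hη : ∀ l : ℕ, 1 ≤ l → 0 ≤ η l ∧ η l ≤ η' * (l : ℝ) ^ (-θ)) :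
    ∃ K : ℝ, ∀ k : ℕ,
      ∏ l ∈ Ico (⌊(a * k) ^ (1 / (1 - χ))⌋₊) (⌊(a * (k + 1)) ^ (1 / (1 - χ))⌋₊),
        (1 + (l : ℝ) ^ (-χ) * ‖Ah l‖ + η l) ≤ K :=
  stmt_11_general d χ θ η' a hχ hθ hη' ha A Ah hAhsym hAhpsd hcoefA η hη
end
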